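/- arXiv:1704.04323 — 4 statements merged into one kernel-verified Lean document; each statement's English description precedes it below -/
import Mathlib

section
/- (Douglas' lemma, one direction) If A and B are bounded operators on a Hilbert space H with A A* ≤ λ B B* for some λ ≥ 0, then the range of A is contained in the range of B. -/
/-!
Testing the order relation at `x` gives `‖A* x‖ ≤ √λ ‖B* x‖`. Hence, for a fixed `u`, the
functional `B* x ↦ ⟪u, A* x⟫` is well defined and bounded on the range of `B*`. Extending it by
Hahn–Banach and representing the extension by Riesz as `⟪v, ·⟫` gives `⟪B v, x⟫ = ⟪A u, x⟫` for
all `x`, that is, `B v = A u`.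
-/

open ContinuousLinearMap
open scoped InnerProductSpace

theorem LinearMap.exists_strongDual_comp_eq_of_norm_le {𝕜 E G : Type*} [RCLike 𝕜]
    [AddCommGroup E] [Module 𝕜 E] [NormedAddCommGroup G] [NormedSpace 𝕜 G]
    (S : E →ₗ[𝕜] G) (f : E →ₗ[𝕜] 𝕜) (c : ℝ) (hfS : ∀ x, ‖f x‖ ≤ c * ‖S x‖) :
    ∃ g : StrongDual 𝕜 G, ∀ x, g (S x) = f x := by
  have hker : LinearMap.ker S ≤ LinearMap.ker f := fun x hx => by
    simpa [LinearMap.mem_ker.mp hx] using hfS x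
  let φ : LinearMap.range S →ₗ[𝕜] 𝕜 :=
    (LinearMap.ker S).liftQ f hker ∘ₗ S.quotKerEquivRange.symm.toLinearMap
  have hφ : ∀ x, φ ⟨S x, LinearMap.mem_range_self S x⟩ = f x := fun x => by
    simp [φ, LinearMap.quotKerEquivRange_symm_apply_image]
  have hφc : ∀ y, ‖φ y‖ ≤ c * ‖y‖ := by
    rintro ⟨_, x, rfl⟩
    rw [hφ]
    exact hfS x
  obtain ⟨g, hg, -⟩ := exists_extension_norm_eq _ (φ.mkContinuous c hφc)
  exact ⟨g, fun x => (hg _).trans (hφ x)⟩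

section Adjoint

variable {𝕜 E F G : Type*} [RCLike 𝕜]
  [NormedAddCommGroup E] [InnerProductSpace 𝕜 E] [CompleteSpace E]
  [NormedAddCommGroup F] [InnerProductSpace 𝕜 F] [CompleteSpace F]
  [NormedAddCommGroup G] [InnerProductSpace 𝕜 G] [CompleteSpace G]

theorem ContinuousLinearMap.norm_adjoint_apply_le_of_comp_adjoint_le (A : F →L[𝕜] E)
    (B : G →L[𝕜] E) {c : ℝ}
    (h : A ∘L adjoint A ≤ (c : 𝕜) • (B ∘L adjoint B)) (x : E) :
    ‖adjoint A x‖ ≤ √c * ‖adjoint B x‖ := by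
  have hsq : ‖adjoint A x‖ ^ 2 ≤ c * ‖adjoint B x‖ ^ 2 := by
    have := h.re_inner_nonneg_left x
    rw [sub_apply, inner_sub_left, map_sub, smul_apply, inner_smul_left, RCLike.conj_ofReal,
      RCLike.re_ofReal_mul] at this
    rw [apply_norm_sq_eq_inner_adjoint_left, apply_norm_sq_eq_inner_adjoint_left, adjoint_adjoint,
      adjoint_adjoint]
    linarith
  -- No sign condition on `c` is needed: for `c < 0`, `√c = 0` and `hsq` forces `A* x = 0`.
  calc ‖adjoint A x‖ = √(‖adjoint A x‖ ^ 2) := (Real.sqrt_sq (norm_nonneg _)).symm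
    _ ≤ √(c * ‖adjoint B x‖ ^ 2) := Real.sqrt_le_sqrt hsq
    _ = √c * ‖adjoint B x‖ := by
      rw [Real.sqrt_mul' _ (sq_nonneg _), Real.sqrt_sq (norm_nonneg _)]

theorem ContinuousLinearMap.range_subset_range_of_comp_adjoint_le (A : F →L[𝕜] E)
    (B : G →L[𝕜] E) {c : ℝ}
    (h : A ∘L adjoint A ≤ (c : 𝕜) • (B ∘L adjoint B)) : Set.range A ⊆ Set.range B := by
  rintro _ ⟨u, rfl⟩
  obtain ⟨g, hg⟩ := (adjoint B : E →ₗ[𝕜] G).exists_strongDual_comp_eq_of_norm_le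
    ((innerSL 𝕜 u : F →ₗ[𝕜] 𝕜) ∘ₗ (adjoint A : E →ₗ[𝕜] F)) (‖u‖ * √c) fun x =>
      calc ‖⟪u, adjoint A x⟫_𝕜‖ ≤ ‖u‖ * ‖adjoint A x‖ := norm_inner_le_norm _ _
        _ ≤ ‖u‖ * (√c * ‖adjoint B x‖) := by
          gcongr
          exact norm_adjoint_apply_le_of_comp_adjoint_le A B h x
        _ = ‖u‖ * √c * ‖adjoint B x‖ := (mul_assoc _ _ _).symm
  refine ⟨(InnerProductSpace.toDual 𝕜 G).symm g, ext_inner_right 𝕜 fun x => ?_⟩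
  rw [← adjoint_inner_right B, InnerProductSpace.toDual_symm_apply, ← adjoint_inner_right A]
  exact hg x

end Adjoint

theorem stmt_4_general {H : Type*} [NormedAddCommGroup H] [InnerProductSpace ℂ H]
    [CompleteSpace H] (A B : H →L[ℂ] H) (lam : ℝ)
    (h : (lam • (B ∘L ContinuousLinearMap.adjoint B)
        - A ∘L ContinuousLinearMap.adjoint A).IsPositive) :
    Set.range A ⊆ Set.range B := by
  refine range_subset_range_of_comp_adjoint_le A B (c := lam) ?_
  rwa [le_def, ← RCLike.real_smul_eq_coe_smul]

/-- Douglas' lemma, one direction: if `A A* ≤ λ B B*` for some `λ ≥ 0`, then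
`Ran A ⊆ Ran B`. -/
theorem stmt_4 {H : Type*} [NormedAddCommGroup H] [InnerProductSpace ℂ H]
    [CompleteSpace H] (A B : H →L[ℂ] H) (lam : ℝ) (hlam : 0 ≤ lam)
    (h : (lam • (B ∘L ContinuousLinearMap.adjoint B)
        - A ∘L ContinuousLinearMap.adjoint A).IsPositive) :
    Set.range A ⊆ Set.range B :=
  stmt_4_general A B lam h
end

section
/- (Douglas' lemma, converse direction) If A and B are bounded operators on a Hilbert space H and the range of A is contained in the range of B, then there exists λ ≥ 0 such that A A* ≤ λ B B*. -/
/-!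
Restricted to `(ker B)ᗮ`, the operator `B` is injective with the same range, so `A = B C` for a
linear `C` obtained by pulling `A` back through that restriction. The graph of `C` is closed, so
`C` is bounded by the closed graph theorem. Then `A A* = B (C C*) B* ≤ ‖C‖² B B*`, since
`C C* ≤ ‖C‖²` in the C⋆-algebra of operators and conjugation by `B` preserves the order.
-/

open ContinuousLinearMap

theorem CStarAlgebra.mul_star_le_norm_sq_smul_mul_star {A : Type*} [CStarAlgebra A]
    [PartialOrder A] [StarOrderedRing A] (b c : A) :
    b * c * star (b * c) ≤ ‖c‖ ^ 2 • (b * star b) := by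
  calc b * c * star (b * c) = b * (c * star c) * star b := by
        rw [star_mul, mul_assoc, mul_assoc, mul_assoc]
    _ ≤ b * algebraMap ℝ A (‖c‖ ^ 2) * star b :=
        star_right_conjugate_le_conjugate mul_star_le_algebraMap_norm_sq b
    _ = ‖c‖ ^ 2 • (b * star b) := by
        rw [Algebra.algebraMap_eq_smul_one, mul_smul_comm, mul_one, smul_mul_assoc]

theorem ContinuousLinearMap.exists_comp_eq_of_injective_of_range_subset {𝕜 E F G : Type*}
    [NontriviallyNormedField 𝕜] [NormedAddCommGroup E] [NormedSpace 𝕜 E] [CompleteSpace E]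
    [NormedAddCommGroup F] [NormedSpace 𝕜 F]
    [NormedAddCommGroup G] [NormedSpace 𝕜 G] [CompleteSpace G]
    {A : E →L[𝕜] F} {B : G →L[𝕜] F} (hB : Function.Injective B)
    (h : Set.range A ⊆ Set.range B) : ∃ C : E →L[𝕜] G, B ∘L C = A := by
  let C : E →ₗ[𝕜] G := (LinearEquiv.ofInjective (B : G →ₗ[𝕜] F) hB).symm ∘ₗ
      (A : E →ₗ[𝕜] F).codRestrict (LinearMap.range (B : G →ₗ[𝕜] F)) (fun x => h ⟨x, rfl⟩)
  have hBC : ∀ x, B (C x) = A x := fun x =>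
    LinearEquiv.ofInjective_symm_apply (h := hB) _ _
  -- `B` is injective, so the graph of `C` is the closed set `{(x, z) | B z = A x}`.
  have hgraph : (C.graph : Set (E × G)) = {p | B p.2 = A p.1} := by
    ext ⟨x, z⟩
    simp only [SetLike.mem_coe, LinearMap.mem_graph_iff, Set.mem_ofPred_eq]
    exact ⟨fun hz => hz ▸ hBC x, fun hz => hB (hz.trans (hBC x).symm)⟩
  have hC : Continuous C := C.continuous_of_isClosed_graph <| by
    rw [hgraph]
    exact isClosed_eq (by fun_prop) (by fun_prop)
  exact ⟨⟨C, hC⟩, ext hBC⟩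

theorem ContinuousLinearMap.exists_comp_eq_of_range_subset {𝕜 E F G : Type*} [RCLike 𝕜]
    [NormedAddCommGroup E] [NormedSpace 𝕜 E] [CompleteSpace E]
    [NormedAddCommGroup F] [NormedSpace 𝕜 F]
    [NormedAddCommGroup G] [InnerProductSpace 𝕜 G] [CompleteSpace G]
    {A : E →L[𝕜] F} {B : G →L[𝕜] F} (h : Set.range A ⊆ Set.range B) :
    ∃ C : E →L[𝕜] G, B ∘L C = A := by
  set K := B.kerᗮ
  have hinj : Function.Injective (B ∘L K.subtypeL) := by
    rw [injective_iff_map_eq_zero]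
    intro z hz
    have : (z : G) ∈ B.ker ⊓ K := ⟨hz, z.2⟩
    rw [Submodule.inf_orthogonal_eq_bot, Submodule.mem_bot] at this
    exact Subtype.ext this
  have hrange : Set.range B ⊆ Set.range (B ∘L K.subtypeL) := by
    rintro _ ⟨y, rfl⟩
    obtain ⟨u, hu, v, hv, rfl⟩ := B.ker.exists_add_mem_mem_orthogonal y
    exact ⟨⟨v, hv⟩, by simpa using LinearMap.mem_ker.mp hu⟩
  obtain ⟨C, hC⟩ := exists_comp_eq_of_injective_of_range_subset hinj (h.trans hrange)
  exact ⟨K.subtypeL ∘L C, by rw [← comp_assoc, hC]⟩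

/-- Douglas' lemma, converse direction: if `Ran A ⊆ Ran B`, then there exists
`λ ≥ 0` with `A A* ≤ λ B B*`. -/
theorem stmt_5 {H : Type*} [NormedAddCommGroup H] [InnerProductSpace ℂ H]
    [CompleteSpace H] (A B : H →L[ℂ] H) (h : Set.range A ⊆ Set.range B) :
    ∃ lam : ℝ, 0 ≤ lam ∧ (lam • (B ∘L ContinuousLinearMap.adjoint B)
        - A ∘L ContinuousLinearMap.adjoint A).IsPositive := by
  obtain ⟨C, rfl⟩ := exists_comp_eq_of_range_subset h
  refine ⟨‖C‖ ^ 2, by positivity, ?_⟩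
  simpa only [le_def, mul_def, star_eq_adjoint] using
    CStarAlgebra.mul_star_le_norm_sq_smul_mul_star B C
end

section
/- Let P = (p_{i,j})_{i,j ∈ ℕ} be the matrix of a bounded positive semidefinite operator on ℓ²(ℕ) such that each row and each column of P has only finitely many nonzero entries. Then P = B B* for some bounded operator B on ℓ²(ℕ) whose matrix is upper triangular (B_{i,j} = 0 for i > j). -/
/-!
Write `P = S† S` and `vₙ = S eₙ`. Let `Kₙ` be the closed span of `{vₖ | k ≥ n}` and `dₙ` the
component of `vₙ` orthogonal to `Kₙ₊₁`, so that `Kₙ ⊆ Kₙ₊₁ + ℂ dₙ` and the `dₙ` are mutually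
orthogonal. Finite rows of `P` mean that each `vⱼ` is orthogonal to `Kₘ` for `m` large, which
forces `⋂ Kₙ = 0`; hence the normalised nonzero `dₙ` form a Hilbert basis of `K₀`. The isometry
`W : K₀ → ℓ²` sending the normalised `dₙ` to `eₙ` gives `C = W S` with `C† C = S† S = P`, and
`C` is lower triangular because `vᵢ ∈ Kᵢ ⊥ dⱼ` for `j < i`. Take `B = C†`.
-/

open Filter Set Submodule
open scoped InnerProductSpace InnerProduct lp

noncomputable section

theorem lp.orthonormal_single (𝕜 : Type*) [RCLike 𝕜] (ι : Type*) [DecidableEq ι] :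
    Orthonormal 𝕜 (fun i : ι => lp.single 2 i (1 : 𝕜)) := by
  simp_rw [orthonormal_iff_ite, lp.inner_single_left, lp.single_apply]
  intro i j
  split_ifs <;> simp_all

variable (𝕜 : Type*) {ι : Type*} [RCLike 𝕜] [DecidableEq ι] in
def lp.extendByZero (p : ι → Prop) : ℓ²({i // p i}, 𝕜) →ₗᵢ[𝕜] ℓ²(ι, 𝕜) :=
  ((lp.orthonormal_single 𝕜 ι).comp _ Subtype.val_injective).orthogonalFamily.linearIsometry

theorem lp.extendByZero_apply {𝕜 ι : Type*} [RCLike 𝕜] [DecidableEq ι] {p : ι → Prop}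
    [DecidablePred p] (f : ℓ²({i // p i}, 𝕜)) (i : ι) :
    lp.extendByZero 𝕜 p f i = if h : p i then f ⟨i, h⟩ else 0 := by
  have hsum := (((lp.orthonormal_single 𝕜 ι).comp _ Subtype.val_injective).orthogonalFamily
    |>.hasSum_linearIsometry f).mapL (lp.evalCLM 𝕜 (fun _ : ι => 𝕜) 2 i)
  simp only [lp.evalCLM] at hsum
  refine hsum.unique ?_
  split_ifs with h
  · convert hasSum_single (⟨i, h⟩ : {i // p i}) fun j hj => ?_ using 1
    · simp
    · simp only [ne_eq, Subtype.ext_iff] at hj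
      simp [Ne.symm hj]
  · convert hasSum_zero with j
    have : (j : ι) ≠ i := fun hj => h (hj ▸ j.2)
    simp [this]

theorem ContinuousLinearMap.IsPositive.exists_eq_adjoint_comp_self {H : Type*}
    [NormedAddCommGroup H] [InnerProductSpace ℂ H] [CompleteSpace H] {P : H →L[ℂ] H}
    (hP : P.IsPositive) : ∃ S : H →L[ℂ] H, P = S† ∘L S :=
  CStarAlgebra.nonneg_iff_eq_star_mul_self.mp ((nonneg_iff_isPositive P).mpr hP)

section TailSpan

variable (𝕜 : Type*) {E : Type*} [RCLike 𝕜] [NormedAddCommGroup E] [InnerProductSpace 𝕜 E]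
  (v : ℕ → E)

def tailSpan (n : ℕ) : Submodule 𝕜 E := (span 𝕜 (v '' Ici n)).topologicalClosure

variable {𝕜 v}

lemma tailSpan_antitone : Antitone (tailSpan 𝕜 v) := fun _ _ h =>
  topologicalClosure_mono (span_mono (image_mono (Ici_subset_Ici.mpr h)))

lemma mem_tailSpan {n k : ℕ} (h : n ≤ k) : v k ∈ tailSpan 𝕜 v n :=
  le_topologicalClosure _ (subset_span ⟨k, h, rfl⟩)

lemma mem_orthogonal_tailSpan_iff {n : ℕ} {x : E} :
    x ∈ (tailSpan 𝕜 v n)ᗮ ↔ ∀ k, n ≤ k → ⟪v k, x⟫_𝕜 = 0 := by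
  rw [tailSpan, orthogonal_closure, ← span_singleton_le_iff_mem, ← isOrtho_iff_le, isOrtho_comm,
    isOrtho_span]
  simp

lemma iInf_tailSpan_eq_bot (hv : ∀ j, ∀ᶠ k in atTop, ⟪v k, v j⟫_𝕜 = 0) :
    ⨅ n, tailSpan 𝕜 v n = ⊥ := by
  refine eq_bot_iff.mpr fun x hx => ?_
  have hx' (n : ℕ) : x ∈ tailSpan 𝕜 v n := mem_iInf _ |>.mp hx n
  have hxv : x ∈ (tailSpan 𝕜 v 0)ᗮ := mem_orthogonal_tailSpan_iff.mpr fun j _ => by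
    obtain ⟨m, hm⟩ := eventually_atTop.mp (hv j)
    exact inner_left_of_mem_orthogonal (hx' m) (mem_orthogonal_tailSpan_iff.mpr hm)
  exact (mem_bot 𝕜).mpr (inner_self_eq_zero.mp (inner_right_of_mem_orthogonal (hx' 0) hxv))

variable (𝕜 v) [CompleteSpace E]

instance (n : ℕ) : CompleteSpace (tailSpan 𝕜 v n) :=
  topologicalClosure.completeSpace _

def innovation (n : ℕ) : E := v n - (tailSpan 𝕜 v (n + 1)).starProjection (v n)

def normalizedInnovation (n : ℕ) : E := (‖innovation 𝕜 v n‖⁻¹ : 𝕜) • innovation 𝕜 v n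

variable {𝕜 v}

lemma innovation_mem_tailSpan (n : ℕ) : innovation 𝕜 v n ∈ tailSpan 𝕜 v n :=
  sub_mem (mem_tailSpan le_rfl) (tailSpan_antitone n.le_succ (starProjection_apply_mem _ _))

lemma innovation_mem_orthogonal (n : ℕ) : innovation 𝕜 v n ∈ (tailSpan 𝕜 v (n + 1))ᗮ :=
  sub_starProjection_mem_orthogonal _

lemma tailSpan_le_sup_span_innovation (n : ℕ) :
    tailSpan 𝕜 v n ≤ tailSpan 𝕜 v (n + 1) ⊔ 𝕜 ∙ innovation 𝕜 v n := by
  refine topologicalClosure_minimal _ (span_le.mpr ?_)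
    (isClosed_sup_finiteDimensional _ _ (isClosed_topologicalClosure _))
  rintro _ ⟨k, hk, rfl⟩
  rcases (mem_Ici.mp hk).eq_or_lt with rfl | hk
  · rw [← sub_add_cancel (v n) (innovation 𝕜 v n)]
    refine add_mem (mem_sup_left ?_) (mem_sup_right (mem_span_singleton_self _))
    simp [innovation]
  · exact mem_sup_left (mem_tailSpan hk)

lemma tailSpan_inf_orthogonal_innovation_le (n : ℕ) :
    tailSpan 𝕜 v n ⊓ (𝕜 ∙ innovation 𝕜 v n)ᗮ ≤ tailSpan 𝕜 v (n + 1) := by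
  have hle : tailSpan 𝕜 v (n + 1) ≤ (𝕜 ∙ innovation 𝕜 v n)ᗮ :=
    (le_orthogonal_orthogonal _).trans
      (orthogonal_le ((span_singleton_le_iff_mem _ _).mpr (innovation_mem_orthogonal n)))
  calc _ ≤ (tailSpan 𝕜 v (n + 1) ⊔ 𝕜 ∙ innovation 𝕜 v n) ⊓ (𝕜 ∙ innovation 𝕜 v n)ᗮ :=
        inf_le_inf_right _ (tailSpan_le_sup_span_innovation n)
    _ = tailSpan 𝕜 v (n + 1) := by
        rw [sup_inf_assoc_of_le _ hle, inf_orthogonal_eq_bot, sup_bot_eq]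

lemma inner_innovation_eq_zero_of_lt {m n : ℕ} (h : m < n) :
    ⟪innovation 𝕜 v m, innovation 𝕜 v n⟫_𝕜 = 0 :=
  inner_left_of_mem_orthogonal (tailSpan_antitone h (innovation_mem_tailSpan n))
    (innovation_mem_orthogonal m)

lemma eq_zero_of_forall_inner_innovation_eq_zero (hv : ∀ j, ∀ᶠ k in atTop, ⟪v k, v j⟫_𝕜 = 0)
    {x : E} (hx : x ∈ tailSpan 𝕜 v 0) (h : ∀ n, ⟪innovation 𝕜 v n, x⟫_𝕜 = 0) : x = 0 := by
  have hmem (n : ℕ) : x ∈ tailSpan 𝕜 v n := by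
    induction n with
    | zero => exact hx
    | succ n ih =>
      exact tailSpan_inf_orthogonal_innovation_le n
        ⟨ih, mem_orthogonal_singleton_iff_inner_right.mpr (h n)⟩
  simpa [iInf_tailSpan_eq_bot hv] using mem_iInf _ |>.mpr hmem

lemma normalizedInnovation_mem_tailSpan (n : ℕ) :
    normalizedInnovation 𝕜 v n ∈ tailSpan 𝕜 v n :=
  smul_mem _ _ (innovation_mem_tailSpan n)

lemma normalizedInnovation_mem_orthogonal (n : ℕ) :
    normalizedInnovation 𝕜 v n ∈ (tailSpan 𝕜 v (n + 1))ᗮ :=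
  smul_mem _ _ (innovation_mem_orthogonal n)

lemma inner_normalizedInnovation_eq_zero_iff {n : ℕ} {x : E} :
    ⟪normalizedInnovation 𝕜 v n, x⟫_𝕜 = 0 ↔ ⟪innovation 𝕜 v n, x⟫_𝕜 = 0 := by
  by_cases h : innovation 𝕜 v n = 0
  · simp [normalizedInnovation, h]
  · simp [normalizedInnovation, inner_smul_left, h]

lemma orthonormal_normalizedInnovation :
    Orthonormal 𝕜 (fun i : {n // innovation 𝕜 v n ≠ 0} => normalizedInnovation 𝕜 v i) := by
  refine ⟨fun i => norm_smul_inv_norm i.2, fun i j hij => ?_⟩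
  have key : ⟪innovation 𝕜 v i, innovation 𝕜 v j⟫_𝕜 = 0 := by
    rcases lt_or_gt_of_ne (Subtype.coe_injective.ne hij) with h | h
    · exact inner_innovation_eq_zero_of_lt h
    · exact inner_eq_zero_symm.mp (inner_innovation_eq_zero_of_lt h)
  simp [normalizedInnovation, inner_smul_left, inner_smul_right, key]

lemma orthogonal_span_normalizedInnovation_eq_bot
    (hv : ∀ j, ∀ᶠ k in atTop, ⟪v k, v j⟫_𝕜 = 0)
    (hmem : ∀ i : {n // innovation 𝕜 v n ≠ 0}, normalizedInnovation 𝕜 v i ∈ tailSpan 𝕜 v 0) :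
    (span 𝕜 (range fun i : {n // innovation 𝕜 v n ≠ 0} =>
      (⟨normalizedInnovation 𝕜 v i, hmem i⟩ : tailSpan 𝕜 v 0)))ᗮ = ⊥ := by
  refine eq_bot_iff.mpr fun x hx => (mem_bot 𝕜).mpr (Subtype.ext ?_)
  refine eq_zero_of_forall_inner_innovation_eq_zero hv x.2 fun n => ?_
  by_cases h : innovation 𝕜 v n = 0
  · simp [h]
  · exact inner_normalizedInnovation_eq_zero_iff.mp
      ((mem_orthogonal _ _).mp hx _ (subset_span ⟨⟨n, h⟩, rfl⟩))

def innovationBasis (hv : ∀ j, ∀ᶠ k in atTop, ⟪v k, v j⟫_𝕜 = 0) :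
    HilbertBasis {n // innovation 𝕜 v n ≠ 0} 𝕜 (tailSpan 𝕜 v 0) :=
  have hmem (i : {n // innovation 𝕜 v n ≠ 0}) : normalizedInnovation 𝕜 v i ∈ tailSpan 𝕜 v 0 :=
    tailSpan_antitone (Nat.zero_le _) (normalizedInnovation_mem_tailSpan i)
  HilbertBasis.mkOfOrthogonalEqBot (orthonormal_normalizedInnovation.codRestrict _ hmem)
    (orthogonal_span_normalizedInnovation_eq_bot hv hmem)

lemma innovationBasis_repr_apply (hv : ∀ j, ∀ᶠ k in atTop, ⟪v k, v j⟫_𝕜 = 0)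
    (x : tailSpan 𝕜 v 0) (i : {n // innovation 𝕜 v n ≠ 0}) :
    (innovationBasis hv).repr x i = ⟪normalizedInnovation 𝕜 v i, x⟫_𝕜 := by
  rw [HilbertBasis.repr_apply_apply, innovationBasis]
  erw [HilbertBasis.coe_mkOfOrthogonalEqBot]
  rfl

def innovationIsometry (hv : ∀ j, ∀ᶠ k in atTop, ⟪v k, v j⟫_𝕜 = 0) :
    tailSpan 𝕜 v 0 →ₗᵢ[𝕜] ℓ²(ℕ, 𝕜) :=
  (lp.extendByZero 𝕜 _).comp (innovationBasis hv).repr.toLinearIsometry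

lemma innovationIsometry_apply (hv : ∀ j, ∀ᶠ k in atTop, ⟪v k, v j⟫_𝕜 = 0)
    (x : tailSpan 𝕜 v 0) (n : ℕ) :
    innovationIsometry hv x n = ⟪normalizedInnovation 𝕜 v n, x⟫_𝕜 := by
  classical
  change lp.extendByZero 𝕜 _ ((innovationBasis hv).repr x) n = _
  rw [lp.extendByZero_apply]
  split_ifs with h
  · exact innovationBasis_repr_apply hv x ⟨n, h⟩
  · simp [normalizedInnovation, not_not.mp h]

end TailSpan

section Factorization

variable {𝕜 E : Type*} [RCLike 𝕜] [NormedAddCommGroup E] [InnerProductSpace 𝕜 E]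

lemma apply_mem_tailSpan_zero (S : ℓ²(ℕ, 𝕜) →L[𝕜] E) (x : ℓ²(ℕ, 𝕜)) :
    S x ∈ tailSpan 𝕜 (fun n => S (lp.single 2 n 1)) 0 := by
  have hsum := (lp.hasSum_single ENNReal.ofNat_ne_top x).mapL S
  refine (isClosed_topologicalClosure _).mem_of_tendsto hsum (Eventually.of_forall fun s => ?_)
  refine sum_mem fun n _ => ?_
  rw [← mul_one (x n), ← smul_eq_mul, lp.single_smul, map_smul]
  exact smul_mem _ _ (mem_tailSpan (Nat.zero_le n))

variable [CompleteSpace E]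

theorem exists_lowerTriangular_adjoint_comp_self_eq (S : ℓ²(ℕ, 𝕜) →L[𝕜] E)
    (hS : ∀ j, ∀ᶠ k in atTop, ⟪S (lp.single 2 k 1), S (lp.single 2 j 1)⟫_𝕜 = 0) :
    ∃ C : ℓ²(ℕ, 𝕜) →L[𝕜] ℓ²(ℕ, 𝕜),
      (∀ i j, j < i → C (lp.single 2 i 1) j = 0) ∧ C† ∘L C = S† ∘L S := by
  let C := (innovationIsometry hS).toContinuousLinearMap ∘L
    S.codRestrict _ (apply_mem_tailSpan_zero S)
  refine ⟨C, fun i j hji => ?_, ?_⟩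
  · change innovationIsometry hS _ j = 0
    rw [innovationIsometry_apply]
    exact inner_left_of_mem_orthogonal (tailSpan_antitone hji (mem_tailSpan le_rfl))
      (normalizedInnovation_mem_orthogonal j)
  · refine ContinuousLinearMap.ext fun x => ext_inner_right 𝕜 fun y => ?_
    simp only [ContinuousLinearMap.comp_apply, ContinuousLinearMap.adjoint_inner_left]
    exact (innovationIsometry hS).inner_map_map _ _

end Factorization

theorem stmt_9_general (P : lp (fun _ : ℕ => ℂ) 2 →L[ℂ] lp (fun _ : ℕ => ℂ) 2)
    (hP : P.IsPositive)
    (hrow : ∀ i : ℕ, {j : ℕ |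
        (inner ℂ (P (lp.single 2 j 1)) (lp.single 2 i 1) : ℂ) ≠ 0}.Finite) :
    ∃ B : lp (fun _ : ℕ => ℂ) 2 →L[ℂ] lp (fun _ : ℕ => ℂ) 2,
      (∀ i j : ℕ, j < i →
        (inner ℂ (B (lp.single 2 j 1)) (lp.single 2 i 1) : ℂ) = 0) ∧
      P = B ∘L ContinuousLinearMap.adjoint B := by
  obtain ⟨S, rfl⟩ := hP.exists_eq_adjoint_comp_self
  have hS : ∀ j, ∀ᶠ k in atTop, ⟪S (lp.single 2 k 1), S (lp.single 2 j 1)⟫_ℂ = 0 := fun j => by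
    rw [← Nat.cofinite_eq_atTop, eventually_cofinite]
    simpa [ContinuousLinearMap.adjoint_inner_left] using hrow j
  obtain ⟨C, hC, hCS⟩ := exists_lowerTriangular_adjoint_comp_self_eq S hS
  refine ⟨C†, fun i j hji => ?_, ?_⟩
  · rw [ContinuousLinearMap.adjoint_inner_left, lp.inner_single_left, hC i j hji, inner_zero_right]
  · rw [ContinuousLinearMap.adjoint_adjoint, hCS]

/-- Main theorem of the paper for `d = 1`: a bounded positive semidefinite
operator `P` on `ℓ²(ℕ)` whose matrix is eventually `0` in each row and column
factors as `P = B B*` with `B` bounded and upper triangular. -/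
theorem stmt_9 (P : lp (fun _ : ℕ => ℂ) 2 →L[ℂ] lp (fun _ : ℕ => ℂ) 2)
    (hP : P.IsPositive)
    (hcol : ∀ j : ℕ, {i : ℕ |
        (inner ℂ (P (lp.single 2 j 1)) (lp.single 2 i 1) : ℂ) ≠ 0}.Finite)
    (hrow : ∀ i : ℕ, {j : ℕ |
        (inner ℂ (P (lp.single 2 j 1)) (lp.single 2 i 1) : ℂ) ≠ 0}.Finite) :
    ∃ B : lp (fun _ : ℕ => ℂ) 2 →L[ℂ] lp (fun _ : ℕ => ℂ) 2,
      (∀ i j : ℕ, j < i →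
        (inner ℂ (B (lp.single 2 j 1)) (lp.single 2 i 1) : ℂ) = 0) ∧
      P = B ∘L ContinuousLinearMap.adjoint B :=
  stmt_9_general P hP hrow
end
end

section
/- Let N = {0, E₁, I} ⊂ B(ℂ²) be the nest where E₁ is projection onto the first coordinate, and consider the 4×4 block structure on ℂ² ⊗ ℂ². An operator B ∈ Alg N ⊗ Alg N satisfies B_{2,3} = 0 in matrix form (with the ordered basis e₁⊗e₁, e₁⊗e₂, e₂⊗e₁, e₂⊗e₂). Consequently, if U is a 4×4 invertible upper triangular matrix with U_{2,3} ≠ 0, then there is no B in the tensor product algebra Alg N ⊗ Alg N with U U* = B B*. -/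
/-- The Kronecker product of 2×2 matrices realized in `M₄(ℂ)` with respect to
the ordered basis `e₁⊗e₁, e₁⊗e₂, e₂⊗e₁, e₂⊗e₂`. -/
def kron4 (X Y : Matrix (Fin 2) (Fin 2) ℂ) : Matrix (Fin 4) (Fin 4) ℂ :=
  fun i j =>
    X ⟨i.val / 2, by have := i.isLt; omega⟩ ⟨j.val / 2, by have := j.isLt; omega⟩ *
    Y ⟨i.val % 2, by omega⟩ ⟨j.val % 2, by omega⟩

/-- The tensor product `Alg N ⊗ Alg N` of two copies of the nest algebra of the
nest `{0, E₁, I} ⊂ B(ℂ²)` (i.e. the span of Kronecker products of upper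
triangular 2×2 matrices inside `M₄(ℂ)`). -/
noncomputable def tensorNestAlg : Submodule ℂ (Matrix (Fin 4) (Fin 4) ℂ) :=
  Submodule.span ℂ {M : Matrix (Fin 4) (Fin 4) ℂ |
    ∃ X Y : Matrix (Fin 2) (Fin 2) ℂ,
      (∀ i j : Fin 2, j < i → X i j = 0) ∧ (∀ i j : Fin 2, j < i → Y i j = 0) ∧
      M = kron4 X Y}

/-!
Every Kronecker product of upper triangular matrices is upper triangular and vanishes at the
`(e₁⊗e₂, e₂⊗e₁)` entry, since that entry is `X₁₂ Y₂₁`; both properties pass to the span.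
If `U Uᴴ = B Bᴴ` with `B` invertible and both upper triangular, then `W = B⁻¹U` is unitary and
upper triangular, hence diagonal, so `U = B W` has the same `(2,3)` entry as `B` up to a scalar
factor, namely `0`.
-/

open Matrix

namespace Matrix

variable {n R : Type*} [Fintype n] [DecidableEq n] [LinearOrder n] [CommRing R] [StarRing R]

theorem BlockTriangular.isDiag_of_mem_unitaryGroup {W : Matrix n n R}
    (hW : W.BlockTriangular id) (hWu : W ∈ unitaryGroup n R) : W.IsDiag := by
  have hWW : W * star W = 1 := mem_unitaryGroup_iff.mp hWu
  have : Invertible W := invertibleOfRightInverse W (star W) hWW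
  have hstar : (star W).BlockTriangular id := by
    rw [← inv_eq_right_inv hWW]
    exact blockTriangular_inv_of_blockTriangular hW
  intro i j hij
  rcases hij.lt_or_gt with hlt | hgt
  · simpa using congrArg star (hstar hlt : Wᴴ j i = 0)
  · exact hW hgt

theorem BlockTriangular.exists_eq_mul_diagonal_of_mul_conjTranspose_eq {U B : Matrix n n R}
    (hU : U.BlockTriangular id) (hB : B.BlockTriangular id) (hBu : IsUnit B)
    (h : U * Uᴴ = B * Bᴴ) : ∃ d : n → R, U = B * diagonal d := by
  have hBd : IsUnit B.det := (isUnit_iff_isUnit_det B).mp hBu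
  have : Invertible B := hBu.invertible
  set W := B⁻¹ * U with hW
  have hWu : W ∈ unitaryGroup n R := by
    rw [mem_unitaryGroup_iff, star_eq_conjTranspose, hW, conjTranspose_mul,
      conjTranspose_nonsing_inv]
    calc B⁻¹ * U * (Uᴴ * Bᴴ⁻¹) = B⁻¹ * (U * Uᴴ) * Bᴴ⁻¹ := by simp only [Matrix.mul_assoc]
      _ = 1 := by
        rw [h, Matrix.mul_assoc, Matrix.mul_assoc, mul_nonsing_inv _ (by simpa using hBd.star),
          Matrix.mul_one, nonsing_inv_mul _ hBd]
  have hWt : W.BlockTriangular id := (blockTriangular_inv_of_blockTriangular hB).mul hU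
  refine ⟨W.diag, ?_⟩
  rw [(hWt.isDiag_of_mem_unitaryGroup hWu).diagonal_diag, hW]
  exact (mul_nonsing_inv_cancel_left (A := B) U hBd).symm

end Matrix

section TensorNestAlg

variable {X Y : Matrix (Fin 2) (Fin 2) ℂ}

theorem kron4_blockTriangular (hX : ∀ i j : Fin 2, j < i → X i j = 0)
    (hY : ∀ i j : Fin 2, j < i → Y i j = 0) : (kron4 X Y).BlockTriangular id := by
  intro i j hij
  have hij : j.val < i.val := hij
  by_cases hdiv : j.val / 2 < i.val / 2
  · exact mul_eq_zero_of_left (hX _ _ (Fin.mk_lt_mk.mpr hdiv)) _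
  · exact mul_eq_zero_of_right _ (hY _ _ (Fin.mk_lt_mk.mpr (by omega)))

theorem kron4_apply_one_two (hY : ∀ i j : Fin 2, j < i → Y i j = 0) : kron4 X Y 1 2 = 0 :=
  mul_eq_zero_of_right _ (hY 1 0 Fin.zero_lt_one)

theorem tensorNestAlg_le_blockTriangularSubalgebra :
    tensorNestAlg ≤ Subalgebra.toSubmodule (blockTriangularSubalgebra ℂ ℂ id) :=
  Submodule.span_le.mpr fun _ ⟨_, _, hX, hY, hM⟩ => hM ▸ kron4_blockTriangular hX hY

theorem tensorNestAlg_le_ker_entry_one_two :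
    tensorNestAlg ≤ LinearMap.ker (entryLinearMap ℂ ℂ (1 : Fin 4) (2 : Fin 4)) :=
  Submodule.span_le.mpr fun _ ⟨_, _, _, hY, hM⟩ => hM ▸ kron4_apply_one_two hY

end TensorNestAlg

/-- Every `B ∈ Alg N ⊗ Alg N` has `B_{2,3} = 0` (0-indexed: `B 1 2 = 0`);
consequently, if `U` is an invertible upper triangular 4×4 matrix with
`U_{2,3} ≠ 0`, then `U U*` cannot be written as `B B*` with
`B ∈ Alg N ⊗ Alg N`. -/
theorem stmt_17 :
    (∀ B ∈ tensorNestAlg, B 1 2 = 0) ∧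
    ∀ U : Matrix (Fin 4) (Fin 4) ℂ, IsUnit U →
      (∀ i j : Fin 4, j < i → U i j = 0) → U 1 2 ≠ 0 →
      ¬∃ B ∈ tensorNestAlg,
        U * U.conjTranspose = B * B.conjTranspose := by
  have entry_eq_zero {B} (hB : B ∈ tensorNestAlg) : B 1 2 = 0 :=
    tensorNestAlg_le_ker_entry_one_two hB
  refine ⟨fun B hB => entry_eq_zero hB, ?_⟩
  rintro U hU hUt hU12 ⟨B, hB, hUB⟩
  have hBu : IsUnit B := isUnit_of_mul_isUnit_left (hUB ▸ hU.mul hU.star)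
  obtain ⟨d, rfl⟩ := BlockTriangular.exists_eq_mul_diagonal_of_mul_conjTranspose_eq
    (fun i j hij => hUt i j hij) (tensorNestAlg_le_blockTriangularSubalgebra hB) hBu hUB
  exact hU12 (by rw [mul_diagonal, entry_eq_zero hB, zero_mul])
end
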